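/- arXiv:2112.00481 — 5 statements merged into one kernel-verified Lean document; each statement's English description precedes it below -/
import Mathlib

section
/- If C : H → H is ℓ⁻¹-cocoercive with respect to S, i.e. ⟨Cx − Cy, x − y⟩ ≥ ℓ⁻¹‖Cx − Cy‖²_{S⁻¹} for all x, y, then for all x, y, z ∈ H, ⟨Cx − Cy, z − y⟩ ≥ −(ℓ/4)‖z − x‖²_S. -/
/-!
Split `z - y = (z - x) + (x - y)`. Cocoercivity bounds `⟪Cx - Cy, x - y⟫` below by
`ℓ⁻¹ ‖Cx - Cy‖²_{S⁻¹}`, and Young's inequality in the `S`-inner product, applied to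
`S⁻¹(Cx - Cy)` and `z - x`, bounds `⟪Cx - Cy, z - x⟫` below by
`-ℓ⁻¹ ‖Cx - Cy‖²_{S⁻¹} - (ℓ/4) ‖z - x‖²_S`; the two `S⁻¹`-terms cancel.
-/

open RealInnerProductSpace

namespace ContinuousLinearMap

variable {E : Type*} [NormedAddCommGroup E] [InnerProductSpace ℝ E]

theorem IsPositive.neg_le_inner_map {T : E →L[ℝ] E} (hT : T.IsPositive) {ε : ℝ} (hε : 0 < ε)
    (v w : E) : -(ε⁻¹ * ⟪T v, v⟫ + ε / 4 * ⟪T w, w⟫) ≤ ⟪T v, w⟫ := by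
  have hsq : 0 ≤ 4 * ⟪T v, v⟫ + 4 * ε * ⟪T v, w⟫ + ε ^ 2 * ⟪T w, w⟫ := by
    have h := hT.inner_nonneg_left ((2 : ℝ) • v + ε • w)
    simp only [map_add, map_smul, inner_add_left, inner_add_right, real_inner_smul_left,
      real_inner_smul_right, hT.inner_left_eq_inner_right w v] at h
    rw [real_inner_comm (T v) w] at h
    linarith
  have hscale : ε⁻¹ * ⟪T v, v⟫ + ⟪T v, w⟫ + ε / 4 * ⟪T w, w⟫
      = (4 * ⟪T v, v⟫ + 4 * ε * ⟪T v, w⟫ + ε ^ 2 * ⟪T w, w⟫) / (4 * ε) := by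
    field_simp
  have := div_nonneg hsq (by positivity : (0 : ℝ) ≤ 4 * ε)
  linarith

end ContinuousLinearMap

theorem stmt1 {H : Type*} [NormedAddCommGroup H] [InnerProductSpace ℝ H]
    (S Sinv : H →L[ℝ] H)
    (hsa : ∀ x y : H, ⟪S x, y⟫ = ⟪x, S y⟫)
    (m : ℝ) (hm : 0 < m) (hpos : ∀ x : H, ⟪S x, x⟫ ≥ m * ‖x‖ ^ 2)
    (hinv : ∀ x : H, Sinv (S x) = x ∧ S (Sinv x) = x)
    (ℓ : ℝ) (hℓ : 0 < ℓ) (C : H → H)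
    (hcoco : ∀ x y : H, ⟪C x - C y, x - y⟫ ≥ ℓ⁻¹ * ⟪Sinv (C x - C y), C x - C y⟫) :
    ∀ x y z : H, ⟪C x - C y, z - y⟫ ≥ -(ℓ / 4) * ⟪S (z - x), z - x⟫ := by
  intro x y z
  have hS : S.IsPositive :=
    S.isPositive_iff.mpr ⟨hsa, fun x => (hpos x).trans' (by positivity)⟩
  have young := hS.neg_le_inner_map hℓ (Sinv (C x - C y)) (z - x)
  rw [(hinv _).2, real_inner_comm] at young
  have hsplit : ⟪C x - C y, z - y⟫ = ⟪C x - C y, z - x⟫ + ⟪C x - C y, x - y⟫ := by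
    rw [← inner_add_right, sub_add_sub_cancel]
  linarith [hcoco x y]
end

section
/- Let M : H → H and γ > 0 be such that γM − S is L-Lipschitz continuous with respect to S with L < 1 (meaning ‖(γM−S)x − (γM−S)y‖_{S⁻¹} ≤ L‖x−y‖_S for all x,y). Then M is (1−L²)/(2γ)-strongly monotone with respect to S, i.e. ⟨Mx − My, x − y⟩ ≥ ((1−L²)/(2γ))‖x−y‖²_S for all x, y ∈ H. -/
/-! Squaring the Lipschitz bound for `u = γ (Mx - My) - S (x - y)` and expanding `‖u‖²_{S⁻¹}` gives
`γ² ‖Mx - My‖²_{S⁻¹} - 2γ ⟪Mx - My, x - y⟫ + ‖x - y‖²_S ≤ L² ‖x - y‖²_S`;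
dropping the nonnegative first term leaves the claim. -/

open RealInnerProductSpace

section

variable {H : Type*} [NormedAddCommGroup H] [InnerProductSpace ℝ H] {S Sinv : H →L[ℝ] H}

lemma inner_map_self_nonneg_of_rightInverse (hS : ∀ z, 0 ≤ ⟪S z, z⟫)
    (hright : ∀ z, S (Sinv z) = z) (z : H) : 0 ≤ ⟪Sinv z, z⟫ := by
  have h := hS (Sinv z)
  rwa [hright, real_inner_comm] at h

lemma inner_inverse_sub_map (hS : (S : H →ₗ[ℝ] H).IsSymmetric)
    (hleft : ∀ x, Sinv (S x) = x) (hright : ∀ x, S (Sinv x) = x) (a b : H) :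
    ⟪Sinv (a - S b), a - S b⟫ = ⟪Sinv a, a⟫ - 2 * ⟪a, b⟫ + ⟪S b, b⟫ := by
  have hcross : ⟪Sinv a, S b⟫ = ⟪a, b⟫ := by
    rw [← hS.apply_clm, hright]
  rw [map_sub, hleft, inner_sub_left, inner_sub_right, inner_sub_right, hcross,
    real_inner_comm b a, real_inner_comm b (S b)]
  ring

end

theorem stmt2_general {H : Type*} [NormedAddCommGroup H] [InnerProductSpace ℝ H]
    (S Sinv : H →L[ℝ] H)
    (hsa : ∀ x y : H, ⟪S x, y⟫ = ⟪x, S y⟫)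
    (m : ℝ) (hm : 0 < m) (hpos : ∀ x : H, ⟪S x, x⟫ ≥ m * ‖x‖ ^ 2)
    (hinv : ∀ x : H, Sinv (S x) = x ∧ S (Sinv x) = x)
    (M : H → H) (γ L : ℝ) (hγ : 0 < γ)
    (hLip : ∀ x y : H,
      Real.sqrt ⟪Sinv ((γ • M x - S x) - (γ • M y - S y)), (γ • M x - S x) - (γ • M y - S y)⟫
        ≤ L * Real.sqrt ⟪S (x - y), x - y⟫) :
    ∀ x y : H, ⟪M x - M y, x - y⟫ ≥ ((1 - L ^ 2) / (2 * γ)) * ⟪S (x - y), x - y⟫ := by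
  have hS : ∀ z, 0 ≤ ⟪S z, z⟫ := fun z =>
    (mul_nonneg hm.le (sq_nonneg ‖z‖)).trans (hpos z)
  intro x y
  have hM := inner_map_self_nonneg_of_rightInverse hS (fun z => (hinv z).2) (M x - M y)
  have hdiff : (γ • M x - S x) - (γ • M y - S y) = γ • (M x - M y) - S (x - y) := by
    rw [smul_sub, map_sub]; abel
  have hsq := (Real.sqrt_le_iff.mp (hdiff ▸ hLip x y)).2
  rw [mul_pow, Real.sq_sqrt (hS _),
    inner_inverse_sub_map hsa (fun z => (hinv z).1) (fun z => (hinv z).2), map_smul,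
    real_inner_smul_left, real_inner_smul_right, real_inner_smul_left] at hsq
  rw [ge_iff_le, div_mul_eq_mul_div, div_le_iff₀ (by positivity)]
  nlinarith [mul_nonneg (sq_nonneg γ) hM]

theorem stmt2 {H : Type*} [NormedAddCommGroup H] [InnerProductSpace ℝ H]
    (S Sinv : H →L[ℝ] H)
    (hsa : ∀ x y : H, ⟪S x, y⟫ = ⟪x, S y⟫)
    (m : ℝ) (hm : 0 < m) (hpos : ∀ x : H, ⟪S x, x⟫ ≥ m * ‖x‖ ^ 2)
    (hinv : ∀ x : H, Sinv (S x) = x ∧ S (Sinv x) = x)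
    (M : H → H) (γ L : ℝ) (hγ : 0 < γ) (hL0 : 0 ≤ L) (hL1 : L < 1)
    (hLip : ∀ x y : H,
      Real.sqrt ⟪Sinv ((γ • M x - S x) - (γ • M y - S y)), (γ • M x - S x) - (γ • M y - S y)⟫
        ≤ L * Real.sqrt ⟪S (x - y), x - y⟫) :
    ∀ x y : H, ⟪M x - M y, x - y⟫ ≥ ((1 - L ^ 2) / (2 * γ)) * ⟪S (x - y), x - y⟫ :=
  stmt2_general S Sinv hsa m hm hpos hinv M γ L hγ hLip
end

section
/- If M : H → H is continuous, monotone, strongly monotone with constant m > 0, has full domain, and A : H → 2^H is maximally monotone, then the operator (M + A)⁻¹ is single-valued with full domain (i.e., for every v ∈ H there exists a unique x ∈ H with v ∈ Mx + Ax). -/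
/-!
Uniqueness comes from the strong monotonicity of `A + M`. For existence, `A + M` is maximally
monotone: if `(x, u)` is monotonically related to its graph, the resolvents `ξₙ` of `A` at
`x + (u - M x) / (n + 1)` converge, because the decreasing squares `‖x - ξₙ‖²` control the
increments of the sequence; then `ξₙ → x` and the corresponding values of `A` tend to `u - M x`,
which lies in `A x` because maximally monotone graphs are closed. A maximally monotone operator `B`
that is `m`-strongly monotone is onto, by Minty's theorem for `B - m I`.

Minty's theorem (`I + A` is onto) is proved by minimizing `F_A(x, u) + (‖x‖² + ‖u‖²) / 2`, where
`F_A` is the Fitzpatrick function of `A`. This function is strongly midpoint convex, so it has a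
minimizer `(x, u)` in a complete space. Its first-order optimality condition and the inequality
`⟪x, u⟫ ≤ F_A(x, u)` show that `-x ∈ A (-u)` and then that `x + u = 0`.
-/

open RealInnerProductSpace Filter Topology Set

theorem le_of_forall_mem_Ioc_le_add_mul {a b K : ℝ} (h : ∀ t ∈ Ioc (0 : ℝ) 1, a ≤ b + t * K) :
    a ≤ b := by
  have hlim : Tendsto (fun t : ℝ => b + t * K) (𝓝[>] 0) (𝓝 b) := by
    have : Continuous fun t : ℝ => b + t * K := by fun_prop
    simpa using (this.tendsto 0).mono_left nhdsWithin_le_nhds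
  exact ge_of_tendsto hlim (eventually_of_mem (Ioc_mem_nhdsGT one_pos) h)

theorem cauchySeq_of_dist_sq_le {α : Type*} [PseudoMetricSpace α] {s : ℕ → α} {r : ℕ → ℝ}
    (h : ∀ n m, n ≤ m → dist (s n) (s m) ^ 2 ≤ r n) (hr : Tendsto r atTop (𝓝 0)) :
    CauchySeq s :=
  cauchySeq_of_le_tendsto_0' (fun n => √(r n))
    (fun n m hnm => Real.le_sqrt_of_sq_le (h n m hnm)) (by simpa using hr.sqrt)

theorem cauchySeq_of_norm_sub_sq_le {E : Type*} [SeminormedAddCommGroup E] {e : ℕ → E}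
    (h : ∀ n m, n ≤ m → ‖e n - e m‖ ^ 2 ≤ ‖e n‖ ^ 2 - ‖e m‖ ^ 2) : CauchySeq e := by
  have hanti : Antitone fun n => ‖e n‖ ^ 2 := fun n m hnm => by
    linarith [h n m hnm, sq_nonneg ‖e n - e m‖]
  have hbdd : BddBelow (range fun n => ‖e n‖ ^ 2) := ⟨0, by rintro _ ⟨n, rfl⟩; positivity⟩
  refine cauchySeq_of_dist_sq_le (r := fun n => ‖e n‖ ^ 2 - ⨅ k, ‖e k‖ ^ 2)
    (fun n m hnm => ?_) ?_
  · rw [dist_eq_norm]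
    linarith [h n m hnm, ciInf_le hbdd m]
  · rw [← sub_self (⨅ k, ‖e k‖ ^ 2)]
    exact (tendsto_atTop_ciInf hanti hbdd).sub_const _

/-- `z ↦ ⨆ i, f i z` attains its infimum `c` at `z`, phrased through upper bounds of the family so
that no supremum has to be finite. -/
theorem exists_minimizer_sup_of_strongly_midconvex {E ι : Type*} [NormedAddCommGroup E]
    [NormedSpace ℝ E] [CompleteSpace E] (f : ι → E → ℝ) {κ : ℝ} (hκ : 0 < κ)
    (hcont : ∀ i, Continuous (f i))
    (hmid : ∀ i z z', f i (midpoint ℝ z z') ≤ (f i z + f i z') / 2 - κ * ‖z - z'‖ ^ 2)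
    {i₀ : ι} (hi₀ : BddBelow (range (f i₀))) {z₀ : E} {c₀ : ℝ} (hz₀ : ∀ i, f i z₀ ≤ c₀) :
    ∃ z c, (∀ i, f i z ≤ c) ∧ ∀ z' c', (∀ i, f i z' ≤ c') → c ≤ c' := by
  set V : Set ℝ := {c | ∃ z, ∀ i, f i z ≤ c}
  have hV : BddBelow V := by
    obtain ⟨b, hb⟩ := hi₀
    exact ⟨b, fun c ⟨z, hz⟩ => (hb ⟨z, rfl⟩).trans (hz i₀)⟩
  obtain ⟨c, hc_anti, hc_lim, hcV⟩ := exists_seq_tendsto_sInf (S := V) ⟨c₀, z₀, hz₀⟩ hV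
  choose z hz using hcV
  have hinf : ∀ z' c', (∀ i, f i z' ≤ c') → sInf V ≤ c' := fun z' c' h => csInf_le hV ⟨z', h⟩
  have hcauchy : CauchySeq z := by
    refine cauchySeq_of_dist_sq_le (r := fun n => (c n - sInf V) / κ) (fun n m hnm => ?_) ?_
    · have hmin := hinf (midpoint ℝ (z n) (z m)) ((c n + c m) / 2 - κ * ‖z n - z m‖ ^ 2)
        fun i => (hmid i _ _).trans (by linarith [hz n i, hz m i])
      rw [dist_eq_norm, le_div_iff₀ hκ]
      linarith [hc_anti hnm]
    · simpa using (hc_lim.sub_const (sInf V)).div_const κ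
  obtain ⟨zlim, hzlim⟩ := cauchySeq_tendsto_of_complete hcauchy
  refine ⟨zlim, sInf V, fun i => ?_, hinf⟩
  exact le_of_tendsto_of_tendsto ((hcont i).tendsto zlim |>.comp hzlim) hc_lim
    (Eventually.of_forall fun n => hz n i)

section InnerProductSpace

variable {H : Type*} [NormedAddCommGroup H] [InnerProductSpace ℝ H]

theorem norm_midpoint_sq (x y : H) :
    ‖midpoint ℝ x y‖ ^ 2 = (‖x‖ ^ 2 + ‖y‖ ^ 2) / 2 - ‖x - y‖ ^ 2 / 4 := by
  rw [midpoint_eq_smul_add, norm_smul, mul_pow, invOf_eq_inv, norm_inv, Real.norm_two]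
  linarith [norm_add_sq_real x y, norm_sub_sq_real x y]

theorem norm_sub_sq_le_of_inner_smul_sub_smul_nonneg {a b : H} {s t : ℝ} (hs : 0 < s)
    (hst : s ≤ t) (h : 0 ≤ ⟪s • a - t • b, b - a⟫) : ‖a - b‖ ^ 2 ≤ ‖a‖ ^ 2 - ‖b‖ ^ 2 := by
  simp only [inner_sub_left, inner_sub_right, real_inner_smul_left, real_inner_self_eq_norm_sq,
    real_inner_comm a b] at h
  have hcs := real_inner_le_norm a b
  have hba : ‖b‖ ≤ ‖a‖ := by
    by_contra! hlt
    nlinarith [mul_le_mul_of_nonneg_left hcs hs.le,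
      mul_le_mul_of_nonneg_left hcs (hs.trans_le hst).le, mul_lt_mul_of_pos_left hlt hs,
      mul_le_mul_of_nonneg_right hst (norm_nonneg b), norm_nonneg a]
  have hab : ‖b‖ ^ 2 ≤ ⟪a, b⟫ := by
    nlinarith [mul_le_mul_of_nonneg_left (pow_le_pow_left₀ (norm_nonneg b) hba 2) hs.le]
  rw [norm_sub_sq_real]
  linarith

def IsMonotoneOperator (A : H → Set H) : Prop :=
  ∀ x y u v, u ∈ A x → v ∈ A y → 0 ≤ ⟪u - v, x - y⟫

def IsStronglyMonotoneOperator (m : ℝ) (A : H → Set H) : Prop :=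
  ∀ x y u v, u ∈ A x → v ∈ A y → m * ‖x - y‖ ^ 2 ≤ ⟪u - v, x - y⟫

def MonotonicallyRelated (A : H → Set H) (x u : H) : Prop :=
  ∀ y v, v ∈ A y → 0 ≤ ⟪u - v, x - y⟫

structure IsMaximalMonotone (A : H → Set H) : Prop where
  monotone : IsMonotoneOperator A
  maximal : ∀ x u, MonotonicallyRelated A x u → u ∈ A x

variable {A : H → Set H}

theorem IsStronglyMonotoneOperator.isMonotoneOperator {m : ℝ}
    (hA : IsStronglyMonotoneOperator m A) (hm : 0 ≤ m) : IsMonotoneOperator A :=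
  fun x y u v hu hv => (by positivity : 0 ≤ m * ‖x - y‖ ^ 2).trans (hA x y u v hu hv)

theorem IsStronglyMonotoneOperator.eq_of_mem {m : ℝ} (hA : IsStronglyMonotoneOperator m A)
    (hm : 0 < m) {x y v : H} (hx : v ∈ A x) (hy : v ∈ A y) : x = y := by
  have h := hA x y v v hx hy
  rw [sub_self, inner_zero_left] at h
  have : ‖x - y‖ ^ 2 ≤ 0 := nonpos_of_mul_nonpos_right h hm
  simpa [sub_eq_zero] using this

theorem isStronglyMonotoneOperator_add {m : ℝ} (hA : IsMonotoneOperator A) {M : H → H}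
    (hM : ∀ x y, m * ‖x - y‖ ^ 2 ≤ ⟪M x - M y, x - y⟫) :
    IsStronglyMonotoneOperator m fun y => {w | w - M y ∈ A y} := by
  intro x y u v hu hv
  have h := hA x y _ _ hu hv
  rw [show u - v = (u - M x - (v - M y)) + (M x - M y) by abel, inner_add_left]
  linarith [hM x y]

theorem IsMaximalMonotone.mem_of_tendsto (hA : IsMaximalMonotone A) {x u : H} {ξ b : ℕ → H}
    (hb : ∀ n, b n ∈ A (ξ n)) (hξ : Tendsto ξ atTop (𝓝 x)) (hbu : Tendsto b atTop (𝓝 u)) :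
    u ∈ A x :=
  hA.maximal x u fun y v hv => ge_of_tendsto ((hbu.sub_const v).inner (hξ.sub_const y))
    (Eventually.of_forall fun n => hA.monotone _ _ _ _ (hb n) hv)

theorem IsMaximalMonotone.smul_add_preimage (hA : IsMaximalMonotone A) {c : ℝ} (hc : 0 < c)
    (p : H) : IsMaximalMonotone fun y => {w | c • (w + p) ∈ A y} := by
  constructor
  · intro x y u v hu hv
    have h := hA.monotone x y _ _ hu hv
    rw [← smul_sub, add_sub_add_right_eq_sub, real_inner_smul_left] at h
    exact nonneg_of_mul_nonneg_right h hc
  · intro x u hu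
    refine hA.maximal x _ fun y v hv => ?_
    have hw : c • ((c⁻¹ • v - p) + p) = v := by simp [hc.ne']
    have h := hu y (c⁻¹ • v - p) (show c • _ ∈ A y by rwa [hw])
    rw [← hw, ← smul_sub, add_sub_add_right_eq_sub, real_inner_smul_left]
    exact mul_nonneg hc.le h

theorem IsMaximalMonotone.sub_smul (hA : IsMaximalMonotone A) {m : ℝ} (hm₀ : 0 ≤ m)
    (hm : IsStronglyMonotoneOperator m A) : IsMaximalMonotone fun y => {w | w + m • y ∈ A y} := by
  constructor
  · intro x y u v hu hv
    have h := hm x y _ _ hu hv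
    rw [add_sub_add_comm, ← smul_sub, inner_add_left, real_inner_smul_left,
      real_inner_self_eq_norm_sq] at h
    linarith
  · intro x u hu
    refine hA.maximal x _ fun y v hv => ?_
    have h := hu y (v - m • y) (by simpa using hv)
    rw [show u + m • x - v = (u - (v - m • y)) + m • (x - y) by rw [smul_sub]; abel,
      inner_add_left, real_inner_smul_left, real_inner_self_eq_norm_sq]
    exact add_nonneg h (by positivity)

/-- Its supremum over the pairs `p` in the graph of a monotone operator is the Fitzpatrick function
of the operator, evaluated at `z`. -/
def fitzpatrickTerm (p z : H × H) : ℝ := ⟪z.1, p.2⟫ + ⟪p.1, z.2⟫ - ⟪p.1, p.2⟫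

/-- `c` bounds, at `z`, the Fitzpatrick function of `A` plus half the square of the `ℓ²` norm of
`z` in `H × H`. -/
def PenalizedFitzpatrickLE (A : H → Set H) (z : H × H) (c : ℝ) : Prop :=
  ∀ p : H × H, p.2 ∈ A p.1 → fitzpatrickTerm p z + (‖z.1‖ ^ 2 + ‖z.2‖ ^ 2) / 2 ≤ c

theorem inner_sub_sub_eq_inner_sub_fitzpatrickTerm (p z : H × H) :
    ⟪z.2 - p.2, z.1 - p.1⟫ = ⟪z.1, z.2⟫ - fitzpatrickTerm p z := by
  simp only [fitzpatrickTerm, inner_sub_left, inner_sub_right, real_inner_comm z.2,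
    real_inner_comm p.2]
  ring

theorem fitzpatrickTerm_add_smul_sub (p z z' : H × H) (t : ℝ) :
    fitzpatrickTerm p (z + t • (z' - z)) =
      (1 - t) * fitzpatrickTerm p z + t * fitzpatrickTerm p z' := by
  simp only [fitzpatrickTerm, Prod.fst_add, Prod.snd_add, Prod.smul_fst, Prod.smul_snd,
    Prod.fst_sub, Prod.snd_sub, inner_add_left, inner_add_right, inner_sub_left,
    inner_sub_right, real_inner_smul_left, real_inner_smul_right]
  ring

theorem fitzpatrickTerm_add_half_sq_midpoint_le (p z z' : H × H) :
    fitzpatrickTerm p (midpoint ℝ z z') +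
        (‖(midpoint ℝ z z').1‖ ^ 2 + ‖(midpoint ℝ z z').2‖ ^ 2) / 2 ≤
      (fitzpatrickTerm p z + (‖z.1‖ ^ 2 + ‖z.2‖ ^ 2) / 2 +
        (fitzpatrickTerm p z' + (‖z'.1‖ ^ 2 + ‖z'.2‖ ^ 2) / 2)) / 2 - 1 / 8 * ‖z - z'‖ ^ 2 := by
  have hmid : midpoint ℝ z z' = z + (2⁻¹ : ℝ) • (z' - z) := by
    rw [midpoint_eq_smul_add, invOf_eq_inv]; module
  have hfst : (midpoint ℝ z z').1 = midpoint ℝ z.1 z'.1 := by simp [midpoint_eq_smul_add]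
  have hsnd : (midpoint ℝ z z').2 = midpoint ℝ z.2 z'.2 := by simp [midpoint_eq_smul_add]
  have hnorm : ‖z - z'‖ ^ 2 ≤ ‖z.1 - z'.1‖ ^ 2 + ‖z.2 - z'.2‖ ^ 2 := by
    rw [Prod.norm_def, Prod.fst_sub, Prod.snd_sub]
    rcases max_choice ‖z.1 - z'.1‖ ‖z.2 - z'.2‖ with h | h <;> rw [h] <;>
      nlinarith [sq_nonneg ‖z.1 - z'.1‖, sq_nonneg ‖z.2 - z'.2‖]
  rw [hfst, hsnd, norm_midpoint_sq, norm_midpoint_sq, hmid, fitzpatrickTerm_add_smul_sub]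
  linarith

theorem fitzpatrickTerm_le_inner (hA : IsMonotoneOperator A) {p z : H × H} (hp : p.2 ∈ A p.1)
    (hz : z.2 ∈ A z.1) : fitzpatrickTerm p z ≤ ⟪z.1, z.2⟫ := by
  have h := hA _ _ _ _ hz hp
  rw [inner_sub_sub_eq_inner_sub_fitzpatrickTerm] at h
  linarith

theorem IsMaximalMonotone.inner_le_of_forall_fitzpatrickTerm_le (hA : IsMaximalMonotone A)
    {z : H × H} {F : ℝ} (hz : ∀ p : H × H, p.2 ∈ A p.1 → fitzpatrickTerm p z ≤ F) :
    ⟪z.1, z.2⟫ ≤ F := by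
  by_contra! hlt
  have hmem : z.2 ∈ A z.1 := hA.maximal _ _ fun y v hv => by
    rw [inner_sub_sub_eq_inner_sub_fitzpatrickTerm (y, v) z, sub_nonneg]
    exact (hz (y, v) hv).trans hlt.le
  have hself : fitzpatrickTerm z z = ⟪z.1, z.2⟫ := by simp [fitzpatrickTerm]
  exact hlt.not_ge (hself ▸ hz z hmem)

theorem IsMonotoneOperator.exists_fitzpatrick_minimizer [CompleteSpace H]
    (hA : IsMonotoneOperator A) {p₀ : H × H} (hp₀ : p₀.2 ∈ A p₀.1) :
    ∃ z c, PenalizedFitzpatrickLE A z c ∧ ∀ z' c', PenalizedFitzpatrickLE A z' c' → c ≤ c' := by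
  have hbdd : BddBelow (range fun z : H × H =>
      fitzpatrickTerm p₀ z + (‖z.1‖ ^ 2 + ‖z.2‖ ^ 2) / 2) := by
    refine ⟨-‖p₀.1 + p₀.2‖ ^ 2 / 2, ?_⟩
    rintro _ ⟨z, rfl⟩
    simp only [fitzpatrickTerm]
    -- the function equals `(‖z.1 + p₀.2‖² + ‖z.2 + p₀.1‖² - ‖p₀.1 + p₀.2‖²) / 2`
    nlinarith [norm_add_sq_real z.1 p₀.2, norm_add_sq_real z.2 p₀.1, norm_add_sq_real p₀.1 p₀.2,
      real_inner_comm z.2 p₀.1, sq_nonneg ‖z.1 + p₀.2‖, sq_nonneg ‖z.2 + p₀.1‖]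
  obtain ⟨z, c, hz, hmin⟩ := exists_minimizer_sup_of_strongly_midconvex
    (ι := {p : H × H // p.2 ∈ A p.1})
    (fun p z => fitzpatrickTerm p.1 z + (‖z.1‖ ^ 2 + ‖z.2‖ ^ 2) / 2) (κ := 1 / 8) (by norm_num)
    (fun p => by unfold fitzpatrickTerm; fun_prop)
    (fun p => fitzpatrickTerm_add_half_sq_midpoint_le p.1) (i₀ := ⟨p₀, hp₀⟩) hbdd
    (z₀ := p₀) (c₀ := ⟪p₀.1, p₀.2⟫ + (‖p₀.1‖ ^ 2 + ‖p₀.2‖ ^ 2) / 2)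
    (fun p => by linarith [fitzpatrickTerm_le_inner hA p.2 hp₀])
  exact ⟨z, c, fun p hp => hz ⟨p, hp⟩, fun z' c' h => hmin z' c' fun p => h p.1 p.2⟩

theorem IsMonotoneOperator.sub_le_of_fitzpatrick_minimizer (hA : IsMonotoneOperator A)
    {z : H × H} {c : ℝ} (hz : PenalizedFitzpatrickLE A z c)
    (hmin : ∀ z' c', PenalizedFitzpatrickLE A z' c' → c ≤ c') {y w : H} (hw : w ∈ A y) :
    c - (‖z.1‖ ^ 2 + ‖z.2‖ ^ 2) / 2 ≤ ⟪y, w⟫ + ⟪z.1, y - z.1⟫ + ⟪z.2, w - z.2⟫ := by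
  refine le_of_forall_mem_Ioc_le_add_mul
    (K := (‖y - z.1‖ ^ 2 + ‖w - z.2‖ ^ 2) / 2) fun t ⟨ht0, ht1⟩ => ?_
  set zt := z + t • ((y, w) - z)
  have hq : (‖zt.1‖ ^ 2 + ‖zt.2‖ ^ 2) / 2 = (‖z.1‖ ^ 2 + ‖z.2‖ ^ 2) / 2 +
      t * (⟪z.1, y - z.1⟫ + ⟪z.2, w - z.2⟫) + t ^ 2 * ((‖y - z.1‖ ^ 2 + ‖w - z.2‖ ^ 2) / 2) := by
    simp only [zt, Prod.fst_add, Prod.snd_add, Prod.smul_fst, Prod.smul_snd, Prod.fst_sub,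
      Prod.snd_sub, norm_add_sq_real, norm_smul, real_inner_smul_right, mul_pow,
      Real.norm_eq_abs, sq_abs]
    ring
  have hc := hmin zt ((1 - t) * (c - (‖z.1‖ ^ 2 + ‖z.2‖ ^ 2) / 2) + t * ⟪y, w⟫ +
      (‖zt.1‖ ^ 2 + ‖zt.2‖ ^ 2) / 2) fun p hp => by
    rw [fitzpatrickTerm_add_smul_sub]
    have h1 := mul_le_mul_of_nonneg_left (le_sub_iff_add_le.2 (hz p hp)) (sub_nonneg.2 ht1)
    have h2 := mul_le_mul_of_nonneg_left (fitzpatrickTerm_le_inner hA hp (z := (y, w)) hw) ht0.le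
    linarith
  rw [hq] at hc
  refine le_of_mul_le_mul_left ?_ ht0
  linarith

theorem IsMaximalMonotone.exists_add_eq_zero [CompleteSpace H] (hA : IsMaximalMonotone A) :
    ∃ x u, u ∈ A x ∧ x + u = 0 := by
  obtain ⟨p₀, hp₀⟩ : ∃ p : H × H, p.2 ∈ A p.1 := by
    by_contra! h
    exact h (0, 0) (hA.maximal 0 0 fun y v hv => absurd hv (h (y, v)))
  obtain ⟨z, c, hz, hmin⟩ := hA.monotone.exists_fitzpatrick_minimizer hp₀
  have hlow : ⟪z.1, z.2⟫ ≤ c - (‖z.1‖ ^ 2 + ‖z.2‖ ^ 2) / 2 :=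
    hA.inner_le_of_forall_fitzpatrickTerm_le fun p hp => by linarith [hz p hp]
  have key : ∀ y w, w ∈ A y → ‖z.1 + z.2‖ ^ 2 ≤ ⟪z.1 + w, z.2 + y⟫ := by
    intro y w hw
    have h := hA.monotone.sub_le_of_fitzpatrick_minimizer hz hmin hw
    simp only [inner_add_left, inner_add_right, inner_sub_right, real_inner_self_eq_norm_sq]
      at h ⊢
    rw [norm_add_sq_real]
    linarith [real_inner_comm w z.2, real_inner_comm y w]
  have hmem : -z.1 ∈ A (-z.2) := hA.maximal _ _ fun y w hw => by
    rw [← neg_add', ← neg_add', inner_neg_neg]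
    exact (sq_nonneg _).trans (key y w hw)
  have hzero := key _ _ hmem
  rw [add_neg_cancel, add_neg_cancel, inner_zero_left, sq_nonpos_iff, norm_eq_zero] at hzero
  exact ⟨-z.2, -z.1, hmem, by rw [← neg_add, add_comm, hzero, neg_zero]⟩

theorem IsMaximalMonotone.exists_smul_sub_mem [CompleteSpace H] (hA : IsMaximalMonotone A)
    {c : ℝ} (hc : 0 < c) (p : H) : ∃ x, c • (p - x) ∈ A x := by
  obtain ⟨x, u, hu, hxu⟩ := (hA.smul_add_preimage hc p).exists_add_eq_zero
  rw [add_eq_zero_iff_eq_neg'] at hxu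
  exact ⟨x, by simpa [hxu, neg_add_eq_sub, smul_sub] using hu⟩

theorem MonotonicallyRelated.mul_norm_sub_le {N : H → H} {x u ξ : H} {s : ℝ}
    (h : MonotonicallyRelated (fun y => {w | w - N y ∈ A y}) x u)
    (hξ : u - N x + s • (x - ξ) ∈ A ξ) : s * ‖x - ξ‖ ≤ ‖N x - N ξ‖ := by
  have hrel := h ξ (u - N x + s • (x - ξ) + N ξ) (by simpa using hξ)
  rw [show u - (u - N x + s • (x - ξ) + N ξ) = (N x - N ξ) - s • (x - ξ) by abel,
    inner_sub_left, real_inner_smul_left, real_inner_self_eq_norm_sq] at hrel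
  rcases (norm_nonneg (x - ξ)).eq_or_lt with he | he
  · rw [← he, mul_zero]
    exact norm_nonneg _
  · refine le_of_mul_le_mul_right ?_ he
    nlinarith [real_inner_le_norm (N x - N ξ) (x - ξ)]

theorem IsMaximalMonotone.sub_mem_of_monotonicallyRelated_add [CompleteSpace H]
    (hA : IsMaximalMonotone A) {N : H → H} (hN : Continuous N) {x u : H}
    (h : MonotonicallyRelated (fun y => {w | w - N y ∈ A y}) x u) : u - N x ∈ A x := by
  have hres : ∀ n : ℕ, ∃ ξ, u - N x + ((n : ℝ) + 1) • (x - ξ) ∈ A ξ := fun n => by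
    have hn : (0 : ℝ) < n + 1 := by positivity
    obtain ⟨ξ, hξ⟩ := hA.exists_smul_sub_mem hn (x + ((n : ℝ) + 1)⁻¹ • (u - N x))
    refine ⟨ξ, ?_⟩
    rwa [add_sub_right_comm, smul_add, smul_inv_smul₀ hn.ne', add_comm] at hξ
  choose ξ hξ using hres
  set e := fun n => x - ξ n
  have hdecay (n : ℕ) : ((n : ℝ) + 1) * ‖e n‖ ≤ ‖N x - N (ξ n)‖ := h.mul_norm_sub_le (hξ n)
  have hcauchy : CauchySeq e := cauchySeq_of_norm_sub_sq_le fun n m hnm =>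
    norm_sub_sq_le_of_inner_smul_sub_smul_nonneg (s := (n : ℝ) + 1) (t := (m : ℝ) + 1)
      (by positivity) (by gcongr)
      (by simpa [e, sub_sub_sub_cancel_left] using hA.monotone _ _ _ _ (hξ n) (hξ m))
  obtain ⟨e', he'⟩ := cauchySeq_tendsto_of_complete hcauchy
  have hξe : ξ = fun n => x - e n := funext fun n => (sub_sub_cancel x (ξ n)).symm
  have hNξ : Tendsto (fun n => ‖N x - N (ξ n)‖) atTop (𝓝 ‖N x - N (x - e')‖) := by
    rw [hξe]
    exact (((hN.tendsto _).comp (tendsto_const_nhds.sub he')).const_sub (N x)).norm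
  have he0 : Tendsto e atTop (𝓝 0) := by
    rw [tendsto_zero_iff_norm_tendsto_zero]
    refine squeeze_zero (fun n => norm_nonneg _) (fun n => ?_)
      (by simpa using tendsto_one_div_add_atTop_nhds_zero_nat.mul hNξ)
    rw [inv_mul_eq_div, le_div_iff₀' (by positivity)]
    exact hdecay n
  have hNξ0 : Tendsto (fun n => ‖N x - N (ξ n)‖) atTop (𝓝 0) := by
    simpa [tendsto_nhds_unique he' he0] using hNξ
  have hb : Tendsto (fun n : ℕ => ((n : ℝ) + 1) • e n) atTop (𝓝 0) := by
    rw [tendsto_zero_iff_norm_tendsto_zero]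
    refine squeeze_zero (fun n => norm_nonneg _) (fun n => ?_) hNξ0
    rw [norm_smul, Real.norm_of_nonneg (by positivity)]
    exact hdecay n
  simpa using hA.mem_of_tendsto hξ (by simpa [hξe] using tendsto_const_nhds.sub he0)
    (tendsto_const_nhds.add hb)

theorem IsMaximalMonotone.add_continuous [CompleteSpace H] (hA : IsMaximalMonotone A)
    {N : H → H} (hN : Continuous N) (hNmono : ∀ x y, 0 ≤ ⟪N x - N y, x - y⟫) :
    IsMaximalMonotone fun y => {w | w - N y ∈ A y} where
  monotone :=
    (isStronglyMonotoneOperator_add hA.monotone (m := 0) (by simpa using hNmono)).isMonotoneOperator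
      le_rfl
  maximal _ _ h := hA.sub_mem_of_monotonicallyRelated_add hN h

theorem IsMaximalMonotone.exists_mem_of_isStronglyMonotoneOperator [CompleteSpace H]
    (hA : IsMaximalMonotone A) {m : ℝ} (hm : 0 < m) (hstrong : IsStronglyMonotoneOperator m A)
    (v : H) : ∃ x, v ∈ A x := by
  obtain ⟨x, hx⟩ := (hA.sub_smul hm.le hstrong).exists_smul_sub_mem hm (m⁻¹ • v)
  exact ⟨x, by simpa [smul_sub, smul_inv_smul₀ hm.ne'] using hx⟩

end InnerProductSpace

theorem stmt4 {H : Type*} [NormedAddCommGroup H] [InnerProductSpace ℝ H] [CompleteSpace H]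
    (A : H → Set H)
    (hAmono : ∀ x y u v : H, u ∈ A x → v ∈ A y → ⟪u - v, x - y⟫ ≥ 0)
    (hAmax : ∀ x u : H, (∀ y v : H, v ∈ A y → ⟪u - v, x - y⟫ ≥ 0) → u ∈ A x)
    (M : H → H) (hcont : Continuous M)
    (hMmono : ∀ x y : H, ⟪M x - M y, x - y⟫ ≥ 0)
    (m : ℝ) (hm : 0 < m)
    (hstrong : ∀ x y : H, ⟪M x - M y, x - y⟫ ≥ m * ‖x - y‖ ^ 2) :
    ∀ v : H, ∃! x : H, v - M x ∈ A x := by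
  intro v
  have hA : IsMaximalMonotone A := ⟨hAmono, hAmax⟩
  have hsum := isStronglyMonotoneOperator_add hA.monotone hstrong
  obtain ⟨x, hx⟩ :=
    (hA.add_continuous hcont hMmono).exists_mem_of_isStronglyMonotoneOperator hm hsum v
  exact ⟨x, hx, fun y hy => hsum.eq_of_mem hm hy hx⟩
end

section
/- Let S be the block operator on K × G given by S(y,z) = (y − τV*z, −τVy + τσ⁻¹z), where V : K → G is bounded linear and τ, σ > 0 with τσ‖V‖² < 1. Then S is self-adjoint and strongly positive, and for all y ∈ K, z ∈ G one has ‖y‖² ≤ (1 − τσ‖V‖²)⁻¹ ‖(y,z)‖²_S. -/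
/-!
Writing `A = ‖V‖`, Cauchy–Schwarz bounds the quadratic form of `S` at `(y, z)` below by the scalar
form `s² + (τ/σ) t² - 2 τ A s t` in `s = ‖y‖`, `t = ‖z‖`. Its discriminant condition
`(τ A)² < τ/σ` is exactly `τ σ A² < 1`. Completing the square in `t` gives the lower bound
`(1 - τ σ A²) s²`; completing it in either variable and averaging gives strong positivity.
-/

open RealInnerProductSpace

section ScalarQuadraticForm

variable {a b d : ℝ}

theorem sub_sq_div_mul_sq_le (hd : 0 < d) (x y : ℝ) :
    (a - b ^ 2 / d) * x ^ 2 ≤ a * x ^ 2 + d * y ^ 2 - 2 * b * x * y := by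
  have hsq : a * x ^ 2 + d * y ^ 2 - 2 * b * x * y - (a - b ^ 2 / d) * x ^ 2
      = (b * x - d * y) ^ 2 / d := by
    field_simp
    ring
  have : 0 ≤ (b * x - d * y) ^ 2 / d := by positivity
  linarith

theorem exists_pos_mul_sq_add_sq_le (ha : 0 < a) (hd : 0 < d) (hb : b ^ 2 < a * d) :
    ∃ c > 0, ∀ x y : ℝ, c * (x ^ 2 + y ^ 2) ≤ a * x ^ 2 + d * y ^ 2 - 2 * b * x * y := by
  have hx : 0 < a - b ^ 2 / d := by rw [sub_pos, div_lt_iff₀ hd]; linarith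
  have hy : 0 < d - b ^ 2 / a := by rw [sub_pos, div_lt_iff₀ ha]; linarith
  refine ⟨min (a - b ^ 2 / d) (d - b ^ 2 / a) / 2, by positivity, fun x y => ?_⟩
  have h₁ := sub_sq_div_mul_sq_le (a := a) (b := b) hd x y
  have h₂ := sub_sq_div_mul_sq_le (a := d) (b := b) ha y x
  have hmx := mul_le_mul_of_nonneg_right (min_le_left (a - b ^ 2 / d) (d - b ^ 2 / a))
    (sq_nonneg x)
  have hmy := mul_le_mul_of_nonneg_right (min_le_right (a - b ^ 2 / d) (d - b ^ 2 / a))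
    (sq_nonneg y)
  linarith

end ScalarQuadraticForm

section PDHGPreconditioner

variable {K G : Type*}
  [NormedAddCommGroup K] [InnerProductSpace ℝ K] [CompleteSpace K]
  [NormedAddCommGroup G] [InnerProductSpace ℝ G] [CompleteSpace G]

noncomputable def pdhgPrecond (V : K →L[ℝ] G) (τ σ : ℝ) (p : K × G) : K × G :=
  (p.1 - τ • ContinuousLinearMap.adjoint V p.2, (τ / σ) • p.2 - τ • V p.1)

variable (V : K →L[ℝ] G) (τ σ : ℝ)

theorem inner_pdhgPrecond_left (p q : K × G) :
    ⟪(pdhgPrecond V τ σ p).1, q.1⟫ + ⟪(pdhgPrecond V τ σ p).2, q.2⟫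
      = ⟪p.1, (pdhgPrecond V τ σ q).1⟫ + ⟪p.2, (pdhgPrecond V τ σ q).2⟫ := by
  simp only [pdhgPrecond, inner_sub_left, inner_sub_right, real_inner_smul_left,
    real_inner_smul_right, ContinuousLinearMap.adjoint_inner_left,
    ContinuousLinearMap.adjoint_inner_right]
  ring

theorem inner_pdhgPrecond_self (p : K × G) :
    ⟪(pdhgPrecond V τ σ p).1, p.1⟫ + ⟪(pdhgPrecond V τ σ p).2, p.2⟫
      = ‖p.1‖ ^ 2 + τ / σ * ‖p.2‖ ^ 2 - 2 * τ * ⟪V p.1, p.2⟫ := by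
  simp only [pdhgPrecond, inner_sub_left, real_inner_smul_left,
    ContinuousLinearMap.adjoint_inner_left, real_inner_self_eq_norm_sq]
  rw [real_inner_comm p.2 (V p.1)]
  ring

theorem norm_sq_add_sub_le_inner_pdhgPrecond_self (hτ : 0 ≤ τ) (p : K × G) :
    ‖p.1‖ ^ 2 + τ / σ * ‖p.2‖ ^ 2 - 2 * (τ * ‖V‖) * ‖p.1‖ * ‖p.2‖
      ≤ ⟪(pdhgPrecond V τ σ p).1, p.1⟫ + ⟪(pdhgPrecond V τ σ p).2, p.2⟫ := by
  have hV : ⟪V p.1, p.2⟫ ≤ ‖V‖ * ‖p.1‖ * ‖p.2‖ :=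
    (real_inner_le_norm _ _).trans
      (mul_le_mul_of_nonneg_right (V.le_opNorm p.1) (norm_nonneg p.2))
  rw [inner_pdhgPrecond_self]
  nlinarith

end PDHGPreconditioner

theorem stmt12 {K G : Type*}
    [NormedAddCommGroup K] [InnerProductSpace ℝ K] [CompleteSpace K]
    [NormedAddCommGroup G] [InnerProductSpace ℝ G] [CompleteSpace G]
    (V : K →L[ℝ] G) (τ σ : ℝ) (hτ : 0 < τ) (hσ : 0 < σ)
    (hts : τ * σ * ‖V‖ ^ 2 < 1)
    (f : K × G → K × G)
    (hf : ∀ p : K × G,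
      f p = (p.1 - τ • (ContinuousLinearMap.adjoint V) p.2, (τ / σ) • p.2 - τ • V p.1))
    (ip : K × G → K × G → ℝ)
    (hip : ∀ p q : K × G, ip p q = ⟪p.1, q.1⟫ + ⟪p.2, q.2⟫) :
    (∀ p q : K × G, ip (f p) q = ip p (f q)) ∧
    (∃ c > (0 : ℝ), ∀ p : K × G, ip (f p) p ≥ c * (‖p.1‖ ^ 2 + ‖p.2‖ ^ 2)) ∧
    (∀ (y : K) (z : G), ‖y‖ ^ 2 ≤ (1 - τ * σ * ‖V‖ ^ 2)⁻¹ * ip (f (y, z)) (y, z)) := by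
  obtain rfl : f = pdhgPrecond V τ σ := funext hf
  obtain rfl : ip = fun p q => ⟪p.1, q.1⟫ + ⟪p.2, q.2⟫ := funext₂ hip
  have hdisc : (τ * ‖V‖) ^ 2 < 1 * (τ / σ) := by
    rw [one_mul, lt_div_iff₀ hσ]
    nlinarith
  have hlower := norm_sq_add_sub_le_inner_pdhgPrecond_self V τ σ hτ.le
  refine ⟨inner_pdhgPrecond_left V τ σ, ?_, fun y z => ?_⟩
  · obtain ⟨c, hc, hcQ⟩ := exists_pos_mul_sq_add_sq_le one_pos (div_pos hτ hσ) hdisc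
    exact ⟨c, hc, fun p => by linarith [hcQ ‖p.1‖ ‖p.2‖, hlower p]⟩
  · have hcoeff : 1 - (τ * ‖V‖) ^ 2 / (τ / σ) = 1 - τ * σ * ‖V‖ ^ 2 := by
      field_simp
    have hy := sub_sq_div_mul_sq_le (a := 1) (b := τ * ‖V‖) (div_pos hτ hσ) ‖y‖ ‖z‖
    rw [hcoeff] at hy
    rw [le_inv_mul_iff₀ (by linarith)]
    linarith [hlower (y, z)]
end

section
/- With S as above (S(y,z) = (y − τV*z, −τVy + τσ⁻¹z), τσ‖V‖² < 1), the inverse of S is given by S⁻¹ = diag((I − τσV*V)⁻¹, (I − τσVV*)⁻¹) ∘ [[I, σV*], [σV, τ⁻¹σI]], and moreover ‖(y,0)‖²_{S⁻¹} ≤ (1 − τσ‖V‖²)⁻¹‖y‖² and ‖(0,z)‖²_{S⁻¹} ≤ τ⁻¹σ(1 − τσ‖V‖²)⁻¹‖z‖² for all y ∈ K, z ∈ G. -/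
/-!
`V` intertwines `I - τσV*V` with `I - τσVV*`, hence also their inverses: `V P = Q V` and
`V* Q = P V*`. With these two relations both composites of `S` with the proposed inverse
collapse to the identity. For the bounds, `x = P y` satisfies
`⟪x, y⟫ = ‖x‖² - τσ‖Vx‖² ≥ (1 - τσ‖V‖²)‖x‖²`, and Cauchy–Schwarz with AM-GM turns this into
`⟪x, y⟫ ≤ (1 - τσ‖V‖²)⁻¹‖y‖²`; the dual bound is the same argument for `V*`.
-/

open RealInnerProductSpace

open scoped InnerProduct

section Inverse

variable {K G : Type*}
  [NormedAddCommGroup K] [InnerProductSpace ℝ K] [CompleteSpace K]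
  [NormedAddCommGroup G] [InnerProductSpace ℝ G] [CompleteSpace G]

noncomputable def preconditioner (V : K →L[ℝ] G) (τ σ : ℝ) (p : K × G) : K × G :=
  (p.1 - τ • (V†) p.2, (τ / σ) • p.2 - τ • V p.1)

/-- `P` and `Q` play the roles of `(I - τσV*V)⁻¹` and `(I - τσVV*)⁻¹`. -/
noncomputable def preconditionerInv (V : K →L[ℝ] G) (τ σ : ℝ) (P : K →L[ℝ] K)
    (Q : G →L[ℝ] G) (p : K × G) : K × G :=
  (P (p.1 + σ • (V†) p.2), Q (σ • V p.1 + (σ / τ) • p.2))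

variable (V : K →L[ℝ] G) {τ σ : ℝ} {P : K →L[ℝ] K} {Q : G →L[ℝ] G}

/-- `V (I - cV*V) = (I - cVV*) V`, hence `V` also intertwines the inverses. -/
lemma apply_inv_sub_adjoint_comp (c : ℝ) {P : K → K} {Q : G → G}
    (hP : Function.RightInverse P fun x => x - c • (V†) (V x))
    (hQ : Function.LeftInverse Q fun z => z - c • V ((V†) z)) (x : K) :
    V (P x) = Q (V x) :=
  Function.Semiconj.inverses_right (f := V) (fun x => by simp only [map_sub, map_smul]) hP hQ x

lemma preconditioner_preconditionerInv (hτ : τ ≠ 0) (hσ : σ ≠ 0)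
    (hPl : Function.LeftInverse P fun y => y - (τ * σ) • (V†) (V y))
    (hPr : Function.RightInverse P fun y => y - (τ * σ) • (V†) (V y))
    (hQl : Function.LeftInverse Q fun z => z - (τ * σ) • V ((V†) z))
    (hQr : Function.RightInverse Q fun z => z - (τ * σ) • V ((V†) z)) (p : K × G) :
    preconditioner V τ σ (preconditionerInv V τ σ P Q p) = p := by
  obtain ⟨y, z⟩ := p
  have hVP := apply_inv_sub_adjoint_comp V (τ * σ) hPr hQl
  have hAQ : ∀ z, (V†) (Q z) = P ((V†) z) := by
    refine apply_inv_sub_adjoint_comp (V†) (τ * σ) ?_ ?_ <;>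
      simpa only [ContinuousLinearMap.adjoint_adjoint]
  have hy : P y - (τ * σ) • P ((V†) (V y)) = y := by simpa using hPl y
  have hz : Q z - (τ * σ) • Q (V ((V†) z)) = z := by simpa using hQl z
  simp only [preconditioner, preconditionerInv, map_add, map_smul, hVP, hAQ]
  ext
  · linear_combination (norm := match_scalars <;> simp [field]) hy
  · linear_combination (norm := match_scalars <;> simp [field]) hz

lemma preconditionerInv_preconditioner (hτ : τ ≠ 0) (hσ : σ ≠ 0)
    (hP : Function.LeftInverse P fun y => y - (τ * σ) • (V†) (V y))
    (hQ : Function.LeftInverse Q fun z => z - (τ * σ) • V ((V†) z)) (p : K × G) :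
    preconditionerInv V τ σ P Q (preconditioner V τ σ p) = p := by
  obtain ⟨y, z⟩ := p
  have h₁ : y - τ • (V†) z + σ • (V†) ((τ / σ) • z - τ • V y) =
      y - (τ * σ) • (V†) (V y) := by
    simp only [map_sub, map_smul]
    match_scalars <;> simp [field]
  have h₂ : σ • V (y - τ • (V†) z) + (σ / τ) • ((τ / σ) • z - τ • V y) =
      z - (τ * σ) • V ((V†) z) := by
    simp only [map_sub, map_smul]
    match_scalars <;> simp [field]
  simp only [preconditioner, preconditionerInv, h₁, h₂, hP y, hQ z]

end Inverse

section Bound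

variable {H F : Type*}
  [NormedAddCommGroup H] [InnerProductSpace ℝ H] [CompleteSpace H]
  [NormedAddCommGroup F] [InnerProductSpace ℝ F] [CompleteSpace F]

omit [CompleteSpace H] in
/-- By AM-GM, `m ⟪x, y⟫ ≤ m ‖x‖ ‖y‖ ≤ (m² ‖x‖² + ‖y‖²) / 2 ≤ (m ⟪x, y⟫ + ‖y‖²) / 2`. -/
lemma real_inner_le_inv_mul_norm_sq {m : ℝ} (hm : 0 < m) {x y : H}
    (h : m * ‖x‖ ^ 2 ≤ ⟪x, y⟫) : ⟪x, y⟫ ≤ m⁻¹ * ‖y‖ ^ 2 := by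
  rw [inv_mul_eq_div, le_div_iff₀ hm]
  nlinarith [mul_le_mul_of_nonneg_left (real_inner_le_norm x y) hm.le,
    sq_nonneg (m * ‖x‖ - ‖y‖)]

lemma inner_sub_adjoint_apply_self (W : H →L[ℝ] F) (c : ℝ) (x : H) :
    ⟪x, x - c • (W†) (W x)⟫ = ‖x‖ ^ 2 - c * ‖W x‖ ^ 2 := by
  rw [inner_sub_right, real_inner_smul_right, ContinuousLinearMap.adjoint_inner_right,
    real_inner_self_eq_norm_sq, real_inner_self_eq_norm_sq]

lemma mul_norm_sq_le_inner_sub_adjoint_apply_self (W : H →L[ℝ] F) {c : ℝ} (hc : 0 ≤ c)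
    (x : H) : (1 - c * ‖W‖ ^ 2) * ‖x‖ ^ 2 ≤ ⟪x, x - c • (W†) (W x)⟫ := by
  have hW : ‖W x‖ ^ 2 ≤ ‖W‖ ^ 2 * ‖x‖ ^ 2 := by
    rw [← mul_pow]
    exact pow_le_pow_left₀ (norm_nonneg _) (W.le_opNorm x) 2
  rw [inner_sub_adjoint_apply_self]
  nlinarith [mul_le_mul_of_nonneg_left hW hc]

lemma inner_le_of_sub_adjoint_apply_eq (W : H →L[ℝ] F) {c : ℝ} (hc : 0 ≤ c)
    (hcW : c * ‖W‖ ^ 2 < 1) {x y : H} (h : x - c • (W†) (W x) = y) :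
    ⟪x, y⟫ ≤ (1 - c * ‖W‖ ^ 2)⁻¹ * ‖y‖ ^ 2 :=
  real_inner_le_inv_mul_norm_sq (sub_pos.2 hcW)
    (h ▸ mul_norm_sq_le_inner_sub_adjoint_apply_self W hc x)

end Bound

theorem stmt13 {K G : Type*}
    [NormedAddCommGroup K] [InnerProductSpace ℝ K] [CompleteSpace K]
    [NormedAddCommGroup G] [InnerProductSpace ℝ G] [CompleteSpace G]
    (V : K →L[ℝ] G) (τ σ : ℝ) (hτ : 0 < τ) (hσ : 0 < σ)
    (hts : τ * σ * ‖V‖ ^ 2 < 1)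
    (P : K →L[ℝ] K) (Q : G →L[ℝ] G)
    (hP : ∀ y : K, P (y - (τ * σ) • (ContinuousLinearMap.adjoint V) (V y)) = y ∧
      P y - (τ * σ) • (ContinuousLinearMap.adjoint V) (V (P y)) = y)
    (hQ : ∀ z : G, Q (z - (τ * σ) • V ((ContinuousLinearMap.adjoint V) z)) = z ∧
      Q z - (τ * σ) • V ((ContinuousLinearMap.adjoint V) (Q z)) = z)
    (f g : K × G → K × G)
    (hf : ∀ p : K × G,
      f p = (p.1 - τ • (ContinuousLinearMap.adjoint V) p.2, (τ / σ) • p.2 - τ • V p.1))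
    (hg : ∀ p : K × G,
      g p = (P (p.1 + σ • (ContinuousLinearMap.adjoint V) p.2),
             Q (σ • V p.1 + (σ / τ) • p.2)))
    (ip : K × G → K × G → ℝ)
    (hip : ∀ p q : K × G, ip p q = ⟪p.1, q.1⟫ + ⟪p.2, q.2⟫) :
    (∀ p : K × G, f (g p) = p ∧ g (f p) = p) ∧
    (∀ y : K, ip (g (y, 0)) (y, 0) ≤ (1 - τ * σ * ‖V‖ ^ 2)⁻¹ * ‖y‖ ^ 2) ∧
    (∀ z : G, ip (g (0, z)) (0, z) ≤ τ⁻¹ * σ * (1 - τ * σ * ‖V‖ ^ 2)⁻¹ * ‖z‖ ^ 2) := by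
  obtain rfl : f = preconditioner V τ σ := funext hf
  obtain rfl : g = preconditionerInv V τ σ P Q := funext hg
  have hτσ : 0 ≤ τ * σ := by positivity
  refine ⟨fun p => ⟨?_, ?_⟩, fun y => ?_, fun z => ?_⟩
  · exact preconditioner_preconditionerInv V hτ.ne' hσ.ne' (fun y => (hP y).1)
      (fun y => (hP y).2) (fun z => (hQ z).1) (fun z => (hQ z).2) p
  · exact preconditionerInv_preconditioner V hτ.ne' hσ.ne' (fun y => (hP y).1)
      (fun z => (hQ z).1) p
  · simpa [hip, preconditionerInv] using inner_le_of_sub_adjoint_apply_eq V hτσ hts (hP y).2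
  · have hQz : Q z - (τ * σ) • (V††) ((V†) (Q z)) = z := by
      simpa only [ContinuousLinearMap.adjoint_adjoint] using (hQ z).2
    have hbound := inner_le_of_sub_adjoint_apply_eq (V†) hτσ
      (by rwa [LinearIsometryEquiv.norm_map]) hQz
    simp only [hip, preconditionerInv, map_smul, map_zero, smul_zero, zero_add, inner_zero_right,
      real_inner_smul_left, LinearIsometryEquiv.norm_map] at hbound ⊢
    calc σ / τ * ⟪Q z, z⟫ ≤ σ / τ * ((1 - τ * σ * ‖V‖ ^ 2)⁻¹ * ‖z‖ ^ 2) := by gcongr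
      _ = τ⁻¹ * σ * (1 - τ * σ * ‖V‖ ^ 2)⁻¹ * ‖z‖ ^ 2 := by ring
end
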